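/- Let q ∈ [1,∞), let a : (0,∞) → ℂ be measurable with ‖a‖_{V^q} < ∞, and let w : (0,1) → [0,∞) be integrable. Then for every t > 0 the integral b(t) := ∫_0^1 w(r) a(r t) dr is well defined (a is bounded by ‖a‖_{V^q}), and ‖b‖_{V^q} ≤ ( ∫_0^1 w(r) dr ) · ‖a‖_{V^q}. -/

import Mathlib

open MeasureTheory Filter Set
open scoped ENNReal NNReal FourierTransform

noncomputable section

/-- The `q`-variation (extended) norm of a path `a` on `(0, ∞)`:
the supremum over all increasing sequences `0 < t 0 < t 1 < ⋯` of
`(‖a (t 0)‖^q + ∑_k ‖a (t (k+1)) - a (t k)‖^q)^(1/q)`. -/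
def eVarNorm (q : ℝ) (a : ℝ → ℂ) : ℝ≥0∞ :=
  ⨆ (t : ℕ → ℝ) (_ : StrictMono t) (_ : 0 < t 0),
    (ENNReal.ofReal (‖a (t 0)‖ ^ q)
      + ∑' k : ℕ, ENNReal.ofReal (‖a (t (k + 1)) - a (t k)‖ ^ q)) ^ (1 / q)

/-!
Fix an increasing sequence `0 < t 0 < t 1 < ⋯` and `n`. The first `n` increments of
`b(s) = ∫ w(r) a(r s) dr` along `t` form the vector `∫ w(r) Δ(r) dr` of `ℓ^q(Fin n)`, where `Δ(r)`
is the vector of increments of `a` along the increasing sequence `r t`. Minkowski's integral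
inequality `‖∫ F‖ ≤ ∫ ‖F‖` in the normed space `ℓ^q(Fin n)` bounds its norm by
`∫ w(r) ‖Δ(r)‖ dr ≤ (∫ w) ‖a‖_{V^q}`; taking the supremum over `n` and `t` gives the claim.
-/

/-- Index `0` carries `a (t 0)` itself, matching the term `‖a (t 0)‖ ^ q` of `eVarNorm`. -/
def pathIncrement (a : ℝ → ℂ) (t : ℕ → ℝ) : ℕ → ℂ
  | 0 => a (t 0)
  | k + 1 => a (t (k + 1)) - a (t k)

def incrementVector (q : ℝ) (a : ℝ → ℂ) (t : ℕ → ℝ) (n : ℕ) :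
    PiLp (ENNReal.ofReal q) (fun _ : Fin n => ℂ) :=
  WithLp.toLp _ fun i => pathIncrement a t i

lemma pathIncrement_const_mul_comp_mul (c : ℂ) (r : ℝ) (a : ℝ → ℂ) (t : ℕ → ℝ) (k : ℕ) :
    pathIncrement (fun s => c * a (r * s)) t k = c * pathIncrement a (fun k => r * t k) k := by
  cases k <;> simp only [pathIncrement, mul_sub]

section Integral

variable {X : Type*} [MeasurableSpace X] {μ : Measure X} {f : X → ℝ → ℂ} {t : ℕ → ℝ}

lemma integrable_pathIncrement (hf : ∀ k, Integrable (fun x => f x (t k)) μ) (k : ℕ) :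
    Integrable (fun x => pathIncrement (f x) t k) μ := by
  cases k with
  | zero => exact hf 0
  | succ k => exact (hf (k + 1)).sub (hf k)

lemma pathIncrement_integral (hf : ∀ k, Integrable (fun x => f x (t k)) μ) (k : ℕ) :
    pathIncrement (fun s => ∫ x, f x s ∂μ) t k = ∫ x, pathIncrement (f x) t k ∂μ := by
  cases k with
  | zero => rfl
  | succ k => exact (integral_sub (hf (k + 1)) (hf k)).symm

end Integral

lemma eVarNorm_eq_iSup_tsum_pathIncrement (q : ℝ) (a : ℝ → ℂ) :
    eVarNorm q a = ⨆ (t : ℕ → ℝ) (_ : StrictMono t) (_ : 0 < t 0),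
      (∑' k, ENNReal.ofReal (‖pathIncrement a t k‖ ^ q)) ^ (1 / q) := by
  unfold eVarNorm
  congr! 5 with t
  exact (tsum_eq_zero_add' (f := fun k => ENNReal.ofReal (‖pathIncrement a t k‖ ^ q))
    ENNReal.summable).symm

lemma norm_incrementVector_rpow {q : ℝ} (hq : 0 < q) (a : ℝ → ℂ) (t : ℕ → ℝ) (n : ℕ) :
    ‖incrementVector q a t n‖ ^ q = ∑ k ∈ Finset.range n, ‖pathIncrement a t k‖ ^ q := by
  have hp : 0 < (ENNReal.ofReal q).toReal := by rwa [ENNReal.toReal_ofReal hq.le]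
  rw [PiLp.norm_eq_sum hp, ENNReal.toReal_ofReal hq.le, ← Real.rpow_mul (by positivity),
    one_div_mul_cancel hq.ne', Real.rpow_one,
    Finset.sum_range (fun k => ‖pathIncrement a t k‖ ^ q)]
  rfl

lemma norm_incrementVector_nonneg {q : ℝ} (hq : 0 < q) (a : ℝ → ℂ) (t : ℕ → ℝ) (n : ℕ) :
    0 ≤ ‖incrementVector q a t n‖ := by
  rw [PiLp.norm_eq_sum (by rwa [ENNReal.toReal_ofReal hq.le])]
  positivity

lemma eVarNorm_le_ofReal_iff {q C : ℝ} (hq : 0 < q) (hC : 0 ≤ C) (a : ℝ → ℂ) :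
    eVarNorm q a ≤ ENNReal.ofReal C ↔
      ∀ t : ℕ → ℝ, StrictMono t → 0 < t 0 → ∀ n, ‖incrementVector q a t n‖ ≤ C := by
  simp only [eVarNorm_eq_iSup_tsum_pathIncrement, iSup_le_iff, one_div,
    ENNReal.rpow_inv_le_iff hq, ENNReal.ofReal_rpow_of_nonneg hC hq.le]
  refine forall₃_congr fun t _ _ => ?_
  refine ⟨fun h n => ?_, fun h => ENNReal.tsum_le_of_sum_range_le fun n => ?_⟩
  · have hn := (ENNReal.sum_le_tsum (Finset.range n)).trans h
    rwa [← ENNReal.ofReal_sum_of_nonneg (fun k _ => by positivity),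
      ENNReal.ofReal_le_ofReal_iff (by positivity), ← norm_incrementVector_rpow hq,
      Real.rpow_le_rpow_iff (norm_incrementVector_nonneg hq a t n) hC hq] at hn
  · rw [← ENNReal.ofReal_sum_of_nonneg (fun k _ => by positivity), ← norm_incrementVector_rpow hq]
    exact ENNReal.ofReal_le_ofReal
      (Real.rpow_le_rpow (norm_incrementVector_nonneg hq a t n) (h n) hq.le)

lemma norm_incrementVector_le_toReal_eVarNorm {q : ℝ} (hq : 0 < q) {a : ℝ → ℂ}
    (hVq : eVarNorm q a ≠ ⊤) {t : ℕ → ℝ} (ht : StrictMono t) (ht0 : 0 < t 0) (n : ℕ) :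
    ‖incrementVector q a t n‖ ≤ (eVarNorm q a).toReal :=
  (eVarNorm_le_ofReal_iff hq ENNReal.toReal_nonneg a).mp (ENNReal.ofReal_toReal hVq).ge t ht ht0 n

lemma norm_le_toReal_eVarNorm {q : ℝ} (hq : 0 < q) {a : ℝ → ℂ} (hVq : eVarNorm q a ≠ ⊤)
    {s : ℝ} (hs : 0 < s) : ‖a s‖ ≤ (eVarNorm q a).toReal := by
  have hmono : StrictMono fun k : ℕ => s + k := fun i j hij => by simpa using hij
  have h := norm_incrementVector_le_toReal_eVarNorm hq hVq hmono (by simpa using hs) 1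
  rwa [← Real.rpow_le_rpow_iff (norm_incrementVector_nonneg hq _ _ _) ENNReal.toReal_nonneg hq,
    norm_incrementVector_rpow hq, Finset.sum_range_one, pathIncrement, Nat.cast_zero, add_zero,
    Real.rpow_le_rpow_iff (norm_nonneg _) ENNReal.toReal_nonneg hq] at h

lemma eVarNorm_const_mul_comp_mul_le {q : ℝ} (hq : 1 ≤ q) (c : ℂ) {r : ℝ} (hr : 0 < r)
    {a : ℝ → ℂ} (hVq : eVarNorm q a ≠ ⊤) :
    eVarNorm q (fun s => c * a (r * s)) ≤ ENNReal.ofReal (‖c‖ * (eVarNorm q a).toReal) := by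
  have : Fact (1 ≤ ENNReal.ofReal q) := ⟨ENNReal.one_le_ofReal.mpr hq⟩
  have hq0 : 0 < q := zero_lt_one.trans_le hq
  refine (eVarNorm_le_ofReal_iff hq0 (by positivity) _).mpr fun t ht ht0 n => ?_
  have hv : incrementVector q (fun s => c * a (r * s)) t n =
      c • incrementVector q a (fun k => r * t k) n := by
    ext i
    exact pathIncrement_const_mul_comp_mul c r a t i
  rw [hv, norm_smul]
  exact mul_le_mul_of_nonneg_left
    (norm_incrementVector_le_toReal_eVarNorm hq0 hVq (ht.const_mul hr) (mul_pos hr ht0) n)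
    (norm_nonneg c)

theorem eVarNorm_integral_le {q : ℝ} (hq : 1 ≤ q) {X : Type*} [MeasurableSpace X]
    {μ : Measure X} {f : X → ℝ → ℂ} (hf : ∀ s, 0 < s → Integrable (fun x => f x s) μ)
    {C : X → ℝ} (hC : Integrable C μ) (hC0 : 0 ≤ᵐ[μ] C)
    (hfC : ∀ᵐ x ∂μ, eVarNorm q (f x) ≤ ENNReal.ofReal (C x)) :
    eVarNorm q (fun s => ∫ x, f x s ∂μ) ≤ ENNReal.ofReal (∫ x, C x ∂μ) := by
  have : Fact (1 ≤ ENNReal.ofReal q) := ⟨ENNReal.one_le_ofReal.mpr hq⟩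
  have hq0 : 0 < q := zero_lt_one.trans_le hq
  refine (eVarNorm_le_ofReal_iff hq0 (integral_nonneg_of_ae hC0) _).mpr fun t ht ht0 n => ?_
  have hft : ∀ k, Integrable (fun x => f x (t k)) μ := fun k =>
    hf _ (ht0.trans_le (ht.monotone k.zero_le))
  have hv : incrementVector q (fun s => ∫ x, f x s ∂μ) t n =
      ∫ x, incrementVector q (f x) t n ∂μ := by
    ext i
    rw [eval_integral_piLp fun j : Fin n => integrable_pathIncrement hft j]
    exact pathIncrement_integral hft i
  rw [hv]
  refine norm_integral_le_of_norm_le hC ?_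
  filter_upwards [hC0, hfC] with x hx0 hx
  exact (eVarNorm_le_ofReal_iff hq0 hx0 _).mp hx t ht ht0 n

/-- Minkowski-type inequality for `V^q`: if `a : (0,∞) → ℂ` is measurable
with finite `q`-variation and `w : (0,1) → [0,∞)` is integrable, then for every `t > 0` the
integral `b(t) = ∫_0^1 w(r) a(r t) dr` is well defined, and
`‖b‖_{V^q} ≤ (∫_0^1 w) · ‖a‖_{V^q}`. -/
theorem eVarNorm_average_le (q : ℝ) (hq : 1 ≤ q) (a : ℝ → ℂ) (ha : Measurable a)
    (hVq : eVarNorm q a ≠ ⊤) (w : ℝ → ℝ) (hw0 : ∀ r ∈ Set.Ioo (0 : ℝ) 1, 0 ≤ w r)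
    (hwInt : IntegrableOn w (Set.Ioo (0 : ℝ) 1)) :
    (∀ t : ℝ, 0 < t → IntegrableOn (fun r => (w r : ℂ) * a (r * t)) (Set.Ioo (0 : ℝ) 1)) ∧
    eVarNorm q (fun t => ∫ r in Set.Ioo (0 : ℝ) 1, (w r : ℂ) * a (r * t)) ≤
      ENNReal.ofReal (∫ r in Set.Ioo (0 : ℝ) 1, w r) * eVarNorm q a := by
  have hq0 : 0 < q := zero_lt_one.trans_le hq
  set M := (eVarNorm q a).toReal
  have hint : ∀ t, 0 < t → IntegrableOn (fun r => (w r : ℂ) * a (r * t)) (Ioo 0 1) :=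
    fun t ht => hwInt.ofReal.mul_bdd (ha.comp (measurable_mul_const t)).aestronglyMeasurable <|
      (ae_restrict_mem measurableSet_Ioo).mono fun r hr =>
        norm_le_toReal_eVarNorm hq0 hVq (mul_pos hr.1 ht)
  have hwM : ∫ r in Ioo 0 1, ‖(w r : ℂ)‖ * M = (∫ r in Ioo 0 1, w r) * M := by
    rw [integral_mul_const]
    congr 1
    refine setIntegral_congr_fun measurableSet_Ioo fun r hr => ?_
    simp [abs_of_nonneg (hw0 r hr)]
  refine ⟨hint, ?_⟩
  calc _ ≤ ENNReal.ofReal (∫ r in Ioo 0 1, ‖(w r : ℂ)‖ * M) :=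
        eVarNorm_integral_le hq hint (hwInt.ofReal.norm.mul_const M)
          (ae_of_all _ fun r => by positivity)
          (ae_restrict_of_forall_mem measurableSet_Ioo fun r hr =>
            eVarNorm_const_mul_comp_mul_le hq _ hr.1 hVq)
    _ = ENNReal.ofReal (∫ r in Ioo 0 1, w r) * eVarNorm q a := by
        rw [hwM, ENNReal.ofReal_mul (setIntegral_nonneg measurableSet_Ioo hw0),
          ENNReal.ofReal_toReal hVq]

end
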